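/- The symmetric bilinear form ⟨e_k, e_l⟩ = δ_{kl} (q−q⁻¹)^{−k} [α choose k] on the module V_α (0 ≤ α ≤ r−1) makes E^{(l)} and F̄^{(l)} adjoint: ⟨E^{(l)}x, y⟩ = ⟨x, F̄^{(l)}y⟩ for all basis vectors x, y, where F̄^{(l)} = (q−q⁻¹)^l F^{(l)}. -/

import Mathlib

/-!
In the basis `e_k` both sides vanish unless `i = j + l`, and then, after cancelling the powers
of `q - q⁻¹`, adjointness is the quantum binomial identity
`[α choose j] [α-j choose l] = [j+l choose l] [α choose j+l]`, both sides being
`[α][α-1]⋯[α-j-l+1] / ([j]! [l]!)`. This needs `[j+l]! ≠ 0`, which holds at `q = ζ²` because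
`q²` is again a primitive `r`-th root of unity (`r` odd) and `j + l ≤ α < r`.
-/

noncomputable section

/-- The quantum integer `[n]` at parameter `q`. -/
def qint (q : ℂ) (n : ℤ) : ℂ := (q ^ n - q ^ (-n)) / (q - q⁻¹)

/-- The quantum factorial `[n]!` at parameter `q`. -/
def qfact (q : ℂ) (n : ℕ) : ℂ := ∏ k ∈ Finset.range n, qint q (k + 1)

/-- The quantum binomial `[m choose n] = [m][m-1]⋯[m-n+1]/[n]!`. -/
def qbinom (q : ℂ) (m : ℤ) (n : ℕ) : ℂ :=
  (∏ k ∈ Finset.range n, qint q (m - k)) / qfact q n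

/-- The divided power `E^{(l)}` on `V_α`: `E^{(l)} e_i = [α-i+l choose l] e_{i-l}`,
i.e. `(E^{(l)}v)_j = [α-j choose l] v_{j+l}`. -/
def Edp (q : ℂ) (α l : ℕ) (v : Fin (α + 1) → ℂ) : Fin (α + 1) → ℂ :=
  fun j =>
    if h : (j : ℕ) + l ≤ α then
      qbinom q ((α : ℤ) - (j : ℤ)) l * v ⟨(j : ℕ) + l, by omega⟩
    else 0

/-- The renormalized divided power `F̄^{(l)} = (q-q⁻¹)^l F^{(l)}` on `V_α`:
`F̄^{(l)} e_i = (q-q⁻¹)^l [i+l choose l] e_{i+l}`, i.e.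
`(F̄^{(l)}v)_j = (q-q⁻¹)^l [j choose l] v_{j-l}`. -/
def Fbardp (q : ℂ) (α l : ℕ) (v : Fin (α + 1) → ℂ) : Fin (α + 1) → ℂ :=
  fun j =>
    if h : l ≤ (j : ℕ) then
      (q - q⁻¹) ^ l * qbinom q ((j : ℕ) : ℤ) l *
        v ⟨(j : ℕ) - l, by have := j.isLt; omega⟩
    else 0

/-- The symmetric bilinear form `⟨e_k, e_l⟩ = δ_{kl} (q-q⁻¹)^{-k} [α choose k]`
on `V_α`. -/
def vform (q : ℂ) (α : ℕ) (u v : Fin (α + 1) → ℂ) : ℂ :=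
  ∑ k : Fin (α + 1),
    u k * v k * (q - q⁻¹) ^ (-(k : ℤ)) * qbinom q (α : ℤ) k

def qdescProd (q : ℂ) (m : ℤ) (n : ℕ) : ℂ := ∏ k ∈ Finset.range n, qint q (m - k)

section QuantumBinomial

variable {q : ℂ}

lemma qbinom_eq_qdescProd_div (m : ℤ) (n : ℕ) : qbinom q m n = qdescProd q m n / qfact q n :=
  rfl

lemma qdescProd_add (m : ℤ) (a b : ℕ) :
    qdescProd q m (a + b) = qdescProd q m a * qdescProd q (m - a) b := by
  simp only [qdescProd, Finset.prod_range_add]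
  congr 1
  refine Finset.prod_congr rfl fun k _ => ?_
  push_cast
  ring_nf

lemma qfact_eq_qdescProd (n : ℕ) : qfact q n = qdescProd q n n := by
  rw [qfact, qdescProd, ← Finset.prod_range_reflect]
  refine Finset.prod_congr rfl fun k hk => ?_
  have hkn : k < n := Finset.mem_range.mp hk
  congr 1
  push_cast [Nat.cast_sub (by omega : k ≤ n - 1), Nat.cast_sub (by omega : 1 ≤ n)]
  ring

lemma qfact_add (j l : ℕ) : qfact q (j + l) = qdescProd q (j + l : ℕ) l * qfact q j := by
  rw [qfact_eq_qdescProd, qfact_eq_qdescProd, add_comm j l, qdescProd_add]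
  push_cast
  ring_nf

lemma qbinom_mul_qbinom_sub (m : ℤ) (j l : ℕ) (h : qfact q (j + l) ≠ 0) :
    qbinom q m j * qbinom q (m - j) l = qbinom q (j + l : ℕ) l * qbinom q m (j + l) := by
  rw [qfact_add] at h
  have hprod : qdescProd q (j + l : ℕ) l ≠ 0 := left_ne_zero_of_mul h
  have hj : qfact q j ≠ 0 := right_ne_zero_of_mul h
  simp only [qbinom_eq_qdescProd_div, qfact_add, qdescProd_add m j l]
  field_simp

lemma qfact_ne_zero_of_le {m n : ℕ} (hmn : m ≤ n) (h : qfact q n ≠ 0) : qfact q m ≠ 0 := by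
  rw [← Nat.add_sub_cancel' hmn, qfact_add] at h
  exact right_ne_zero_of_mul h

lemma sub_inv_ne_zero_of_qint_ne_zero {n : ℤ} (h : qint q n ≠ 0) : q - q⁻¹ ≠ 0 := by
  rintro hD
  exact h (by rw [qint, hD, div_zero])

/-- `[k] = (q^k - q^{-k}) / (q - q⁻¹)` can only vanish if `q^{2k} = 1` or `q² = 1`. -/
lemma qint_ne_zero_of_isPrimitiveRoot {r : ℕ} (hq : IsPrimitiveRoot (q ^ 2) r) {k : ℕ}
    (hk0 : 0 < k) (hkr : k < r) : qint q k ≠ 0 := by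
  have hq0 : q ≠ 0 := by
    rintro rfl
    exact (hq.ne_zero (by omega)) (by simp)
  have hnum : q ^ (k : ℤ) - q ^ (-(k : ℤ)) ≠ 0 := by
    intro h
    have hpow : (q ^ 2) ^ k = 1 := by
      rw [zpow_neg, zpow_natCast, sub_eq_zero] at h
      rw [← pow_mul, mul_comm, pow_mul, sq]
      nth_rewrite 2 [h]
      exact mul_inv_cancel₀ (pow_ne_zero _ hq0)
    exact absurd (Nat.le_of_dvd hk0 (hq.dvd_of_pow_eq_one k hpow)) (by omega)
  have hden : q - q⁻¹ ≠ 0 := by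
    intro h
    have hsq : (q ^ 2) ^ 1 = 1 := by
      rw [sub_eq_zero] at h
      rw [pow_one, sq]
      nth_rewrite 2 [h]
      exact mul_inv_cancel₀ hq0
    exact absurd (Nat.le_of_dvd one_pos (hq.dvd_of_pow_eq_one 1 hsq)) (by omega)
  exact div_ne_zero hnum hden

lemma qfact_ne_zero_of_isPrimitiveRoot {r : ℕ} (hq : IsPrimitiveRoot (q ^ 2) r) {n : ℕ}
    (hnr : n < r) : qfact q n ≠ 0 :=
  Finset.prod_ne_zero_iff.mpr fun k hk => by
    exact_mod_cast qint_ne_zero_of_isPrimitiveRoot hq k.succ_pos (by simp at hk; omega)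

end QuantumBinomial

section Adjoint

variable {q : ℂ} {α : ℕ}

lemma vform_single_right (u : Fin (α + 1) → ℂ) (j : Fin (α + 1)) :
    vform q α u (Pi.single j 1) = u j * (q - q⁻¹) ^ (-(j : ℤ)) * qbinom q α j := by
  rw [vform, Finset.sum_eq_single j (fun k _ hk => by simp [Pi.single_eq_of_ne hk])
    (by simp)]
  simp

lemma vform_single_left (i : Fin (α + 1)) (v : Fin (α + 1) → ℂ) :
    vform q α (Pi.single i 1) v = v i * (q - q⁻¹) ^ (-(i : ℤ)) * qbinom q α i := by
  rw [vform, Finset.sum_eq_single i (fun k _ hk => by simp [Pi.single_eq_of_ne hk])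
    (by simp)]
  simp

lemma Edp_single_apply (l : ℕ) (i j : Fin (α + 1)) :
    Edp q α l (Pi.single i 1) j = if (j : ℕ) + l = i then qbinom q (α - j) l else 0 := by
  simp only [Edp, Pi.single_apply, Fin.ext_iff]
  split_ifs <;> first | omega | simp

lemma Fbardp_single_apply (l : ℕ) (i j : Fin (α + 1)) :
    Fbardp q α l (Pi.single j 1) i =
      if (j : ℕ) + l = i then (q - q⁻¹) ^ l * qbinom q (i : ℕ) l else 0 := by
  simp only [Fbardp, Pi.single_apply, Fin.ext_iff]
  split_ifs <;> first | omega | simp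

theorem vform_Edp_single_eq_vform_single_Fbardp (hD : q - q⁻¹ ≠ 0) (hfact : qfact q α ≠ 0)
    (l : ℕ) (i j : Fin (α + 1)) :
    vform q α (Edp q α l (Pi.single i 1)) (Pi.single j 1)
      = vform q α (Pi.single i 1) (Fbardp q α l (Pi.single j 1)) := by
  rw [vform_single_right, vform_single_left, Edp_single_apply, Fbardp_single_apply]
  split_ifs with hji
  · have hbinom := qbinom_mul_qbinom_sub (α : ℤ) j l
      (qfact_ne_zero_of_le (hji ▸ Nat.lt_succ_iff.mp i.isLt) hfact)
    have hpow : (q - q⁻¹) ^ (-(j : ℤ)) = (q - q⁻¹) ^ l * (q - q⁻¹) ^ (-(i : ℤ)) := by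
      rw [← hji, ← zpow_natCast, ← zpow_add₀ hD]
      push_cast
      ring_nf
    rw [hpow, ← hji]
    linear_combination (q - q⁻¹) ^ l * (q - q⁻¹) ^ (-((j + l : ℕ) : ℤ)) * hbinom
  · simp

end Adjoint

/-- On `V_α` (`0 ≤ α ≤ r-1`, `q = ζ²`, `ζ` a primitive `r`-th root of unity,
`r` odd), the operators `E^{(l)}` and `F̄^{(l)} = (q-q⁻¹)^l F^{(l)}` are
adjoint for the form `⟨e_k, e_l⟩ = δ_{kl} (q-q⁻¹)^{-k} [α choose k]`:
`⟨E^{(l)} x, y⟩ = ⟨x, F̄^{(l)} y⟩` for all basis vectors `x, y`. -/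
theorem stmt12 (r : ℕ) (hrodd : Odd r) (hr3 : 3 ≤ r) (ζ : ℂ)
    (hζ : IsPrimitiveRoot ζ r) (α : ℕ) (hα : α ≤ r - 1)
    (l : ℕ) (i j : Fin (α + 1)) :
    vform (ζ ^ 2) α (Edp (ζ ^ 2) α l (Pi.single i 1)) (Pi.single j 1)
      = vform (ζ ^ 2) α (Pi.single i 1) (Fbardp (ζ ^ 2) α l (Pi.single j 1)) := by
  have hq : IsPrimitiveRoot ((ζ ^ 2) ^ 2) r := by
    rw [← pow_mul]
    exact hζ.pow_of_coprime 4 (Nat.Coprime.pow_left 2 (Nat.coprime_two_left.mpr hrodd))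
  have hD : ζ ^ 2 - (ζ ^ 2)⁻¹ ≠ 0 :=
    sub_inv_ne_zero_of_qint_ne_zero
      (qint_ne_zero_of_isPrimitiveRoot hq (k := 1) one_pos (by omega))
  exact vform_Edp_single_eq_vform_single_Fbardp hD
    (qfact_ne_zero_of_isPrimitiveRoot hq (by omega)) l i j

end
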